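/- arXiv:2501.13672 — 2 statements merged into one kernel-verified Lean document; each statement's English description precedes it below -/
import Mathlib

section
/- Let V(x) = x⁴/4 − κx²/2, ν = e^{-V}dx/Z, and {p_n} the orthonormal polynomials with recurrence x p_n = a_{n+1}p_{n+1} + a_n p_{n-1}, where b_n = a_n² satisfies n/b_n = b_{n-1} + b_n + b_{n+1} − κ for n ≥ 1. Then p_n' = (n/a_n) p_{n-1} + a_n a_{n-1} a_{n-2} p_{n-3} for all n ≥ 3. -/
open MeasureTheory Real Polynomial

/-- For the Freud weight `V(x) = x⁴/4 − κx²/2`, with orthonormal polynomials `{p_n}`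
satisfying the three-term recurrence `x p_n = a_{n+1} p_{n+1} + a_n p_{n-1}` whose
squared coefficients `b_n = a_n²` satisfy the discrete Painlevé I equation
`n/b_n = b_{n-1} + b_n + b_{n+1} − κ`, one has
`p_n' = (n/a_n) p_{n-1} + a_n a_{n-1} a_{n-2} p_{n-3}` for all `n ≥ 3`. -/
theorem freud_derivative_formula
    (κ : ℝ) (Z : ℝ) (hZ : 0 < Z)
    (V : ℝ → ℝ) (hV : ∀ x, V x = x ^ 4 / 4 - κ * x ^ 2 / 2)
    (ν : Measure ℝ)
    (hν : ν = (volume : Measure ℝ).withDensity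
      (fun x => ENNReal.ofReal (Real.exp (-V x) / Z)))
    (hprob : IsProbabilityMeasure ν)
    (p : ℕ → Polynomial ℝ)
    (hp0 : p 0 = 1)
    (hpdeg : ∀ n, (p n).natDegree = n)
    (hportho : ∀ m n, ∫ x, (p m).eval x * (p n).eval x ∂ν =
      if m = n then (1 : ℝ) else 0)
    (a b : ℕ → ℝ)
    (ha0 : a 0 = 0) (hapos : ∀ n, 1 ≤ n → 0 < a n)
    (hb : ∀ n, b n = (a n) ^ 2)
    (hrec : ∀ n : ℕ, Polynomial.X * p n = a (n + 1) • p (n + 1) + a n • p (n - 1))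
    (hpainleve : ∀ n : ℕ, 1 ≤ n → (n : ℝ) / b n = b (n - 1) + b n + b (n + 1) - κ) :
    ∀ n, 3 ≤ n →
      Polynomial.derivative (p n) =
        ((n : ℝ) / a n) • p (n - 1) + (a n * a (n - 1) * a (n - 2)) • p (n - 3) := by
  have hane : ∀ n, 1 ≤ n → a n ≠ 0 := fun n hn => ne_of_gt (hapos n hn)
  -- Painlevé in terms of `a`, denominators cleared
  have hPa : ∀ n : ℕ, 1 ≤ n →
      (n : ℝ) = a n ^ 2 * (a (n - 1) ^ 2 + a n ^ 2 + a (n + 1) ^ 2 - κ) := by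
    intro n hn
    have h := hpainleve n hn
    rw [hb n, hb (n - 1), hb (n + 1)] at h
    have hb0 : a n ^ 2 ≠ 0 := pow_ne_zero _ (hane n hn)
    rw [div_eq_iff hb0] at h
    linarith [h]
  -- the formula in fact holds for all `n` with ℕ-subtraction conventions
  suffices H : ∀ n : ℕ, Polynomial.derivative (p n) =
      ((n : ℝ) / a n) • p (n - 1) + (a n * a (n - 1) * a (n - 2)) • p (n - 3) from
    fun n _ => H n
  set Q : ℕ → Prop := fun n => Polynomial.derivative (p n) =
      ((n : ℝ) / a n) • p (n - 1) + (a n * a (n - 1) * a (n - 2)) • p (n - 3) with hQ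
  have q0 : Q 0 := by
    simp only [hQ, hp0, ha0]
    simp
  have q1 : Q 1 := by
    have h0 := hrec 0
    rw [hp0, ha0, mul_one] at h0
    simp only [zero_smul, add_zero] at h0
    have hd := congrArg (fun q => Polynomial.derivative q) h0
    simp only [derivative_X, derivative_smul] at hd
    simp only [hQ]
    norm_num [ha0, hp0]
    have h1 : a 1 • Polynomial.derivative (p 1) = a 1 • ((a 1)⁻¹ • (1 : Polynomial ℝ)) := by
      rw [← hd, smul_smul, mul_inv_cancel₀ (hane 1 le_rfl), one_smul]
    have := smul_right_injective (Polynomial ℝ) (hane 1 le_rfl) h1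
    rw [this]
  have step : ∀ k : ℕ, Q k → Q (k + 1) → Q (k + 2) := by
    intro k
    match k with
    | 0 =>
      intro _ hq1
      simp only [hQ] at hq1 ⊢
      norm_num [ha0] at hq1 ⊢
      -- hq1 : derivative (p 1) = (1 / a 1) • p 0  (roughly)
      have hd := congrArg (fun q => Polynomial.derivative q) (hrec 1)
      simp only [derivative_mul, derivative_X, one_mul, derivative_add, derivative_smul,
        show (1:ℕ) - 1 = 0 from rfl] at hd
      rw [hp0] at hd
      simp only [derivative_one, smul_zero, add_zero] at hd
      rw [hq1] at hd
      -- expand X * ((1/a1) • p 0)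
      rw [mul_smul_comm, hrec 0] at hd
      simp only [ha0, zero_smul, add_zero, show (0:ℕ) - 1 = 0 from rfl,
        show (0:ℕ) + 1 = 1 from rfl, show (1:ℕ) + 1 = 2 from rfl] at hd
      have hd' := hd.symm
      apply smul_right_injective (Polynomial ℝ) (hane 2 (by norm_num))
      beta_reduce
      rw [hd']
      match_scalars
      field_simp [hane 1 le_rfl, hane 2 (by norm_num)]
      norm_num
    | 1 =>
      intro hq1 hq2
      simp only [hQ] at hq1 hq2 ⊢
      norm_num [ha0] at hq1 hq2 ⊢
      -- hq1 : derivative (p 1) = (1/a 1) • p 0, hq2 : derivative (p 2) = (2/a 2) • p 1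
      have hd := congrArg (fun q => Polynomial.derivative q) (hrec 2)
      simp only [derivative_mul, derivative_X, one_mul, derivative_add, derivative_smul,
        show (2:ℕ) - 1 = 1 from rfl] at hd
      rw [hq1, hq2] at hd
      rw [mul_smul_comm, hrec 1] at hd
      simp only [show (1:ℕ) - 1 = 0 from rfl, show (1:ℕ) + 1 = 2 from rfl,
        show (2:ℕ) + 1 = 3 from rfl] at hd
      have hd' := eq_sub_iff_add_eq.mpr hd.symm
      apply smul_right_injective (Polynomial ℝ) (hane 3 (by norm_num))
      beta_reduce
      rw [hd']
      match_scalars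
      · field_simp [hane 2 (by norm_num), hane 3 (by norm_num)]
        norm_num
      · have h1 := hPa 1 le_rfl
        have h2 := hPa 2 (by norm_num)
        norm_num [ha0] at h1 h2
        field_simp [hane 1 le_rfl, hane 2 (by norm_num)]
        linear_combination a 1 ^ 2 * h2 - a 2 ^ 2 * h1
    | (j + 2) =>
      intro hq1 hq2
      simp only [hQ] at hq1 hq2 ⊢
      simp only [show j + 2 - 1 = j + 1 from rfl, show j + 2 - 2 = j from rfl,
        show j + 2 - 3 = j - 1 from by omega, show j + 3 - 1 = j + 2 from rfl,
        show j + 3 - 2 = j + 1 from rfl, show j + 3 - 3 = j from rfl,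
        show j + 4 - 1 = j + 3 from rfl, show j + 4 - 2 = j + 2 from rfl,
        show j + 4 - 3 = j + 1 from rfl] at hq1 hq2 ⊢
      have hd := congrArg (fun q => Polynomial.derivative q) (hrec (j + 3))
      simp only [derivative_mul, derivative_X, one_mul, derivative_add, derivative_smul,
        show j + 3 - 1 = j + 2 from rfl] at hd
      rw [hq1, hq2] at hd
      simp only [mul_add, mul_smul_comm] at hd
      rw [hrec (j + 2), hrec j] at hd
      simp only [show j + 2 - 1 = j + 1 from rfl, show j + 2 + 1 = j + 3 from rfl,
        show j + 3 + 1 = j + 4 from rfl] at hd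
      have hd' := eq_sub_iff_add_eq.mpr hd.symm
      apply smul_right_injective (Polynomial ℝ) (hane (j + 4) (by omega))
      beta_reduce
      rw [hd']
      match_scalars
      · field_simp [hane (j + 3) (by omega), hane (j + 4) (by omega)]
        push_cast
        ring
      · have h1 := hPa (j + 2) (by omega)
        have h2 := hPa (j + 3) (by omega)
        simp only [show j + 2 - 1 = j + 1 from rfl, show j + 3 - 1 = j + 2 from rfl] at h1 h2
        field_simp [hane (j + 2) (by omega), hane (j + 3) (by omega)]
        push_cast at h1 h2 ⊢
        nlinarith [h1, h2]
      · ring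
  have main : ∀ n, Q n ∧ Q (n + 1) := by
    intro n
    induction n with
    | zero => exact ⟨q0, q1⟩
    | succ k ih => exact ⟨ih.2, step k ih.1 ih.2⟩
  exact fun n => (main n).1
end

section
/- Let S be the monotone-decreasing map on nonnegative sequences defined by (Sb)_n = √n·f((b_{n-1}+b_{n+1}−κ)/(2√n)) with f(x) = −x+√(1+x²) (and b_0 := 0). If sequences b⁻, b⁺ ∈ ℝ₊^{ℕ*} satisfy 0 ≤ b⁻_n ≤ (Sb⁺)_n ≤ (Sb⁻)_n ≤ b⁺_n for all n ≥ 1, then S has a fixed point b in the product K = Π_n [b⁻_n, b⁺_n]; in particular there is a positive solution of the discrete Painlevé I equation with b⁻_n ≤ b_n ≤ b⁺_n for all n. -/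
/-- `f(x) = −x + √(1+x²)`. -/
noncomputable def painleveF (x : ℝ) : ℝ := -x + Real.sqrt (1 + x ^ 2)

/-- The discrete Painlevé I fixed-point map
`(Sb)_n = √n · f((b_{n-1} + b_{n+1} − κ)/(2√n))` (here `(Sb)_0 = 0` since `√0 = 0`,
encoding the convention `b_0 = 0`). -/
noncomputable def painleveS (κ : ℝ) (b : ℕ → ℝ) (n : ℕ) : ℝ :=
  Real.sqrt n * painleveF ((b (n - 1) + b (n + 1) - κ) / (2 * Real.sqrt n))

lemma painleveF_pos (x : ℝ) : 0 < painleveF x := by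
  unfold painleveF
  have h := Real.sq_sqrt (show (0:ℝ) ≤ 1 + x ^ 2 by positivity)
  have h0 := Real.sqrt_nonneg (1 + x ^ 2)
  rcases le_or_gt x 0 with hx | hx
  · nlinarith
  · nlinarith

lemma painleveF_antitone : Antitone painleveF := by
  intro x y hxy
  unfold painleveF
  have hx := Real.sq_sqrt (show (0:ℝ) ≤ 1 + x ^ 2 by positivity)
  have hy := Real.sq_sqrt (show (0:ℝ) ≤ 1 + y ^ 2 by positivity)
  have hx0 := Real.sqrt_nonneg (1 + x ^ 2)
  have hy0 := Real.sqrt_nonneg (1 + y ^ 2)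
  have hxle : x ≤ Real.sqrt (1 + x ^ 2) := by
    rcases le_or_gt x 0 with h | h
    · exact h.trans hx0
    · nlinarith
  have hyle : y ≤ Real.sqrt (1 + y ^ 2) := by
    rcases le_or_gt y 0 with h | h
    · exact h.trans hy0
    · nlinarith
  have hA1 : 1 ≤ Real.sqrt (1 + x ^ 2) := by nlinarith
  have hB1 : 1 ≤ Real.sqrt (1 + y ^ 2) := by nlinarith
  have key : (y - x) * (y + x) ≤ (y - x) * (Real.sqrt (1 + x ^ 2) + Real.sqrt (1 + y ^ 2)) := by
    apply mul_le_mul_of_nonneg_left _ (by linarith)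
    linarith
  nlinarith [key]

lemma painleveS_zero (κ : ℝ) (b : ℕ → ℝ) : painleveS κ b 0 = 0 := by
  simp [painleveS]

lemma painleveS_pos (κ : ℝ) (b : ℕ → ℝ) {n : ℕ} (hn : 1 ≤ n) : 0 < painleveS κ b n := by
  have hn' : (0:ℝ) < n := by exact_mod_cast hn
  exact mul_pos (Real.sqrt_pos.mpr hn') (painleveF_pos _)

lemma painleveS_anti (κ : ℝ) {x y : ℕ → ℝ} (h : ∀ k, x k ≤ y k) (n : ℕ) :
    painleveS κ y n ≤ painleveS κ x n := by
  unfold painleveS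
  have hs : (0:ℝ) ≤ Real.sqrt n := Real.sqrt_nonneg _
  apply mul_le_mul_of_nonneg_left _ hs
  apply painleveF_antitone
  rw [div_eq_mul_inv, div_eq_mul_inv]
  apply mul_le_mul_of_nonneg_right _ (by positivity)
  have h1 := h (n - 1)
  have h2 := h (n + 1)
  linarith

lemma painleveS_congr (κ : ℝ) {b b' : ℕ → ℝ} (n : ℕ)
    (h1 : b (n - 1) = b' (n - 1)) (h2 : b (n + 1) = b' (n + 1)) :
    painleveS κ b n = painleveS κ b' n := by
  unfold painleveS
  rw [h1, h2]

lemma painleveS_identity (κ : ℝ) (b : ℕ → ℝ) {n : ℕ} (hn : 1 ≤ n) :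
    painleveS κ b n ^ 2 + painleveS κ b n * (b (n - 1) + b (n + 1) - κ) = n := by
  have hn' : (0:ℝ) < n := by exact_mod_cast hn
  have hs : 0 < Real.sqrt n := Real.sqrt_pos.mpr hn'
  set x := (b (n - 1) + b (n + 1) - κ) / (2 * Real.sqrt n) with hxdef
  have hb : b (n - 1) + b (n + 1) - κ = 2 * Real.sqrt n * x := by
    rw [hxdef]; field_simp
  have hs2 : Real.sqrt n ^ 2 = n := Real.sq_sqrt hn'.le
  have hA : Real.sqrt (1 + x ^ 2) ^ 2 = 1 + x ^ 2 :=
    Real.sq_sqrt (by positivity)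
  have key : painleveF x ^ 2 + 2 * x * painleveF x = 1 := by
    unfold painleveF; linear_combination hA
  have hSval : painleveS κ b n = Real.sqrt n * painleveF x := rfl
  rw [hSval, hb]
  calc (Real.sqrt n * painleveF x) ^ 2 + Real.sqrt n * painleveF x * (2 * Real.sqrt n * x)
      = Real.sqrt n ^ 2 * (painleveF x ^ 2 + 2 * x * painleveF x) := by ring
    _ = (n:ℝ) := by rw [key, hs2, mul_one]

/-- Enclosure lemma for the discrete Painlevé I equation: if nonnegative sequences
`b⁻, b⁺` satisfy `0 ≤ b⁻_n ≤ (Sb⁺)_n ≤ (Sb⁻)_n ≤ b⁺_n` for all `n ≥ 1`, then `S` has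
a fixed point `b` in `K = Π_n [b⁻_n, b⁺_n]`; in particular there is a positive
solution of the discrete Painlevé I equation with `b⁻_n ≤ b_n ≤ b⁺_n`. -/
theorem painleve_enclosure_fixed_point
    (κ : ℝ) (bm bp : ℕ → ℝ)
    (hbm0 : bm 0 = 0) (hbp0 : bp 0 = 0)
    (hineq : ∀ n : ℕ, 1 ≤ n →
      0 ≤ bm n ∧ bm n ≤ painleveS κ bp n ∧
      painleveS κ bp n ≤ painleveS κ bm n ∧ painleveS κ bm n ≤ bp n) :
    ∃ b : ℕ → ℝ,
      (∀ n : ℕ, painleveS κ b n = b n) ∧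
      (∀ n : ℕ, bm n ≤ b n ∧ b n ≤ bp n) ∧
      (∀ n : ℕ, 1 ≤ n → (n : ℝ) / b n = b (n - 1) + b n + b (n + 1) - κ) := by
  -- basic facts about the band
  have hband : ∀ k, bm k ≤ bp k := by
    intro k
    rcases Nat.eq_zero_or_pos k with rfl | hk
    · rw [hbm0, hbp0]
    · obtain ⟨h1, h2, h3, h4⟩ := hineq k hk
      linarith
  have hSbm_le_bp : ∀ k, painleveS κ bm k ≤ bp k := by
    intro k
    rcases Nat.eq_zero_or_pos k with rfl | hk
    · rw [painleveS_zero, hbp0]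
    · exact (hineq k hk).2.2.2
  have hbm_le_Sbp : ∀ k, bm k ≤ painleveS κ bp k := by
    intro k
    rcases Nat.eq_zero_or_pos k with rfl | hk
    · rw [painleveS_zero, hbm0]
    · exact (hineq k hk).2.1
  -- S maps the band into itself
  have hSmaps : ∀ x : ℕ → ℝ, (∀ k, bm k ≤ x k ∧ x k ≤ bp k) →
      ∀ k, bm k ≤ painleveS κ x k ∧ painleveS κ x k ≤ bp k := by
    intro x hx k
    rcases Nat.eq_zero_or_pos k with rfl | hk
    · rw [painleveS_zero, hbm0, hbp0]
      exact ⟨le_refl _, le_refl _⟩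
    · constructor
      · exact le_trans (hineq k hk).2.1 (painleveS_anti κ (fun j => (hx j).2) k)
      · exact le_trans (painleveS_anti κ (fun j => (hx j).1) k) (hSbm_le_bp k)
  -- monotonicity of T = S ∘ S
  have hT_mono : ∀ x y : ℕ → ℝ, (∀ k, x k ≤ y k) →
      ∀ k, painleveS κ (painleveS κ x) k ≤ painleveS κ (painleveS κ y) k := by
    intro x y h k
    exact painleveS_anti κ (fun j => painleveS_anti κ h j) k
  -- the Knaster–Tarski set
  set A : Set (ℕ → ℝ) :=
    {x | (∀ k, bm k ≤ x k ∧ x k ≤ bp k) ∧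
         ∀ k, x k ≤ painleveS κ (painleveS κ x) k} with hA_def
  have hbm_mem : bm ∈ A := by
    constructor
    · exact fun k => ⟨le_refl _, hband k⟩
    · intro k
      rcases Nat.eq_zero_or_pos k with rfl | hk
      · rw [painleveS_zero, hbm0]
      · exact le_trans (hineq k hk).2.1 (painleveS_anti κ hSbm_le_bp k)
  have hbddA : ∀ n : ℕ, BddAbove ((fun x : ℕ → ℝ => x n) '' A) := by
    intro n
    refine ⟨bp n, ?_⟩
    rintro y ⟨x, hx, rfl⟩
    exact (hx.1 n).2
  have hneA : ∀ n : ℕ, ((fun x : ℕ → ℝ => x n) '' A).Nonempty :=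
    fun n => ⟨bm n, bm, hbm_mem, rfl⟩
  set a : ℕ → ℝ := fun n => sSup ((fun x : ℕ → ℝ => x n) '' A) with ha_def
  have ha_lb : ∀ x, x ∈ A → ∀ n, x n ≤ a n := by
    intro x hx n
    exact le_csSup (hbddA n) ⟨x, hx, rfl⟩
  have ha_bm : ∀ n, bm n ≤ a n := ha_lb bm hbm_mem
  have ha_bp : ∀ n, a n ≤ bp n := by
    intro n
    apply csSup_le (hneA n)
    rintro y ⟨x, hx, rfl⟩
    exact (hx.1 n).2
  have ha_band : ∀ k, bm k ≤ a k ∧ a k ≤ bp k := fun k => ⟨ha_bm k, ha_bp k⟩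
  have ha_le_T : ∀ n, a n ≤ painleveS κ (painleveS κ a) n := by
    intro n
    apply csSup_le (hneA n)
    rintro y ⟨x, hx, rfl⟩
    exact le_trans (hx.2 n) (hT_mono x a (ha_lb x hx) n)
  have hTa_mem : painleveS κ (painleveS κ a) ∈ A := by
    constructor
    · exact hSmaps _ (hSmaps a ha_band)
    · intro k
      exact hT_mono a (painleveS κ (painleveS κ a)) ha_le_T k
  have ha_fix : ∀ n, painleveS κ (painleveS κ a) n = a n := by
    intro n
    exact le_antisymm (ha_lb _ hTa_mem n) (ha_le_T n)
  have ha0 : a 0 = 0 := by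
    rw [← ha_fix 0, painleveS_zero]
  -- patch the even part of `a` with the odd part of `S a`
  set b : ℕ → ℝ := fun k => if Even k then a k else painleveS κ a k with hb_def
  have hb_even : ∀ k, Even k → b k = a k := by
    intro k hk; simp only [hb_def, if_pos hk]
  have hb_odd : ∀ k, ¬ Even k → b k = painleveS κ a k := by
    intro k hk; simp only [hb_def, if_neg hk]
  have hb_band : ∀ k, bm k ≤ b k ∧ b k ≤ bp k := by
    intro k
    by_cases hk : Even k
    · rw [hb_even k hk]; exact ha_band k
    · rw [hb_odd k hk]; exact hSmaps a ha_band k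
  have hfix : ∀ n, painleveS κ b n = b n := by
    intro n
    rcases Nat.eq_zero_or_pos n with rfl | hn
    · rw [painleveS_zero, hb_even 0 Even.zero, ha0]
    · by_cases hev : Even n
      · -- n even, n ≥ 1 : neighbors are odd
        have hodd1 : ¬ Even (n - 1) := by
          rw [Nat.not_even_iff_odd]
          exact Nat.Even.sub_odd hn hev odd_one
        have hodd2 : ¬ Even (n + 1) := by
          rw [Nat.not_even_iff_odd]
          exact Even.add_one hev
        have : painleveS κ b n = painleveS κ (painleveS κ a) n :=
          painleveS_congr κ n (hb_odd _ hodd1) (hb_odd _ hodd2)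
        rw [this, ha_fix n, hb_even n hev]
      · -- n odd : neighbors are even
        have hodd : Odd n := Nat.not_even_iff_odd.mp hev
        have hev1 : Even (n - 1) := Nat.Odd.sub_odd hodd odd_one
        have hev2 : Even (n + 1) := Odd.add_one hodd
        have : painleveS κ b n = painleveS κ a n :=
          painleveS_congr κ n (hb_even _ hev1) (hb_even _ hev2)
        rw [this, ← hb_odd n hev]
  refine ⟨b, hfix, hb_band, ?_⟩
  intro n hn
  have hpos : 0 < b n := by
    rw [← hfix n]; exact painleveS_pos κ b hn
  have hid := painleveS_identity κ b hn
  rw [hfix n] at hid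
  rw [div_eq_iff hpos.ne']
  linear_combination -hid
end
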